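/- Let R be a commutative ring and G a Gabriel filter of finite type on R. Then there exists a silting R-module T such that Gen T = Div G; in particular, the class Div G of G-divisible modules is a silting class. -/

import Mathlib

universe u

/-- `M ∈ D_σ`: every `R`-linear map `A → M` factors through `σ : A → B`. -/
def MemD {R : Type u} [Ring R] {A B : Type u} [AddCommGroup A] [Module R A]
    [AddCommGroup B] [Module R B] (σ : A →ₗ[R] B)
    (M : Type u) [AddCommGroup M] [Module R M] : Prop :=
  ∀ f : A →ₗ[R] M, ∃ g : B →ₗ[R] M, g.comp σ = f

/-- `M ∈ Gen T`: `M` is an epimorphic image of a direct sum of copies of `T`. -/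
def MemGen (R : Type u) [Ring R] (T : Type u) [AddCommGroup T] [Module R T]
    (M : Type u) [AddCommGroup M] [Module R M] : Prop :=
  ∃ (ι : Type u) (g : (ι →₀ T) →ₗ[R] M), Function.Surjective g

/-- `T` is a silting module: it has a projective presentation `P₋₁ →σ P₀ → T → 0`
with `Gen T = D_σ`. -/
def IsSilting (R : Type u) [Ring R] (T : Type u) [AddCommGroup T] [Module R T] : Prop :=
  ∃ (P₁ P₀ : Type u) (_ : AddCommGroup P₁) (_ : Module R P₁)
    (_ : AddCommGroup P₀) (_ : Module R P₀),
      Module.Projective R P₁ ∧ Module.Projective R P₀ ∧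
      ∃ (σ : P₁ →ₗ[R] P₀) (π : P₀ →ₗ[R] T),
        Function.Surjective π ∧ LinearMap.ker π = LinearMap.range σ ∧
        ∀ (M : Type u) [AddCommGroup M] [Module R M], MemGen R T M ↔ MemD σ M

/-- `G` is a Gabriel filter of ideals of a commutative ring `R`. Here
`(I : x) = {r | x * r ∈ I}` is realized as the comap of `I` along `r ↦ x • r`. -/
def IsGabrielFilter {R : Type u} [CommRing R] (G : Set (Ideal R)) : Prop :=
  ⊤ ∈ G ∧
  (∀ I J : Ideal R, I ∈ G → I ≤ J → J ∈ G) ∧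
  (∀ I ∈ G, ∀ x : R, Submodule.comap (LinearMap.lsmul R R x) I ∈ G) ∧
  (∀ J : Ideal R, (∃ I ∈ G, ∀ x ∈ I, Submodule.comap (LinearMap.lsmul R R x) J ∈ G) →
    J ∈ G)

/-- `G` is of finite type: every ideal of `G` contains a finitely generated ideal
belonging to `G`. -/
def GabrielFiniteType {R : Type u} [CommRing R] (G : Set (Ideal R)) : Prop :=
  ∀ I ∈ G, ∃ J ∈ G, J ≤ I ∧ J.FG

/-- `M ∈ Div G`: `M` is `G`-divisible, i.e. `I • M = M` for every `I ∈ G`. -/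
def MemDiv {R : Type u} [CommRing R] (G : Set (Ideal R))
    (M : Type u) [AddCommGroup M] [Module R M] : Prop :=
  ∀ I ∈ G, I • (⊤ : Submodule R M) = ⊤

/-!
By finite type, `M` is `G`-divisible iff `J • M = M` for every finitely generated `J ∈ G`, i.e.
iff every `m` can be written as `∑ aᵢ • mᵢ` for each generating family `(a₁, …, aₙ)` of such a `J`.
Take generators `e_w` indexed by words `w` in the letters `(a, i)` and relations
`e_w = ∑ aᵢ • e_{(a, i) :: w}`, and let `σ` be the presentation map. A map from the relations to
`M` factors through `σ` iff the system `y_w - ∑ aᵢ • y_{(a, i) :: w} = t_{w, a}` has a solution;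
for divisible `M` it is solved by recursion on the length of `w`, and conversely the solutions of
the systems supported at the empty word exhibit `m ∈ J • M`. The quotient `T` is divisible
because its relations say so, hence so is everything in `Gen T`; and solving the homogeneous system
with `y_[] = m` gives a map `T → M` hitting `m`, so every divisible module lies in `Gen T`.
-/

namespace DivisibleSilting

variable {R : Type u} [CommRing R] {G : Set (Ideal R)}
  {M N : Type u} [AddCommGroup M] [Module R M] [AddCommGroup N] [Module R N]

lemma exists_sum_smul_eq_of_span_smul_top {n : ℕ} {a : Fin n → R}
    (h : Ideal.span (Set.range a) • (⊤ : Submodule R M) = ⊤) (v : M) :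
    ∃ c : Fin n → M, ∑ i, a i • c i = v := by
  have hv : v ∈ Ideal.span (Set.range a) • (⊤ : Submodule R M) := by rw [h]; trivial
  refine Submodule.smul_induction_on hv (fun r hr m _ => ?_) ?_
  · obtain ⟨d, rfl⟩ := (Submodule.mem_span_range_iff_exists_fun R).1 hr
    exact ⟨fun i => d i • m, by simp only [Finset.sum_smul, smul_smul, smul_eq_mul, mul_comm]⟩
  · rintro x y ⟨c, rfl⟩ ⟨d, rfl⟩
    exact ⟨c + d, by simp only [Pi.add_apply, smul_add, Finset.sum_add_distrib]⟩

lemma sum_smul_mem_span_smul_top {n : ℕ} (a : Fin n → R) (c : Fin n → M) :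
    ∑ i, a i • c i ∈ Ideal.span (Set.range a) • (⊤ : Submodule R M) :=
  Submodule.sum_mem _ fun i _ =>
    Submodule.smul_mem_smul (Ideal.subset_span ⟨i, rfl⟩) Submodule.mem_top

lemma MemDiv.finsupp {ι : Type u} (hM : MemDiv G M) : MemDiv G (ι →₀ M) := by
  intro I hI
  refine eq_top_iff.2 (Finsupp.iSup_lsingle_range.ge.trans (iSup_le fun i => ?_))
  rw [LinearMap.range_eq_map, ← hM I hI, Submodule.map_smul'']
  exact Submodule.smul_mono le_rfl le_top

lemma MemDiv.of_surjective (hN : MemDiv G N) {g : N →ₗ[R] M} (hg : Function.Surjective g) :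
    MemDiv G M := by
  intro I hI
  rw [← LinearMap.range_eq_top.2 hg, LinearMap.range_eq_map, ← Submodule.map_smul'', hN I hI]

/-- Every family occurs twice, with both values of `tag`: comparing the two copies of the
relations at the empty word is what shows `D_σ ⊆ Div G`. -/
structure Family (G : Set (Ideal R)) : Type u where
  n : ℕ
  gen : Fin n → R
  span_mem : Ideal.span (Set.range gen) ∈ G
  tag : Bool

variable (G) in
abbrev Word : Type u := List (Σ p : Family G, Fin p.n)

variable (G) in
noncomputable def rel (z : Word G × Family G) : Word G →₀ R :=
  Finsupp.single z.1 1 - ∑ i, z.2.gen i • Finsupp.single (⟨z.2, i⟩ :: z.1) 1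

variable (G) in
noncomputable def presentation : (Word G × Family G →₀ R) →ₗ[R] (Word G →₀ R) :=
  Finsupp.linearCombination R (rel G)

variable (G) in
abbrev SiltingModule : Type u := (Word G →₀ R) ⧸ LinearMap.range (presentation G)

lemma presentation_single (z : Word G × Family G) :
    presentation G (Finsupp.single z 1) = rel G z := by
  rw [presentation, Finsupp.linearCombination_single, one_smul]

lemma linearCombination_rel (y : Word G → M) (z : Word G × Family G) :
    Finsupp.linearCombination R y (rel G z) = y z.1 - ∑ i, z.2.gen i • y (⟨z.2, i⟩ :: z.1) := by
  simp only [rel, map_sub, map_sum, map_smul, Finsupp.linearCombination_single, one_smul]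

lemma memD_presentation_iff :
    MemD (presentation G) M ↔
      ∀ t : Word G × Family G → M, ∃ y : Word G → M,
        ∀ z, Finsupp.linearCombination R y (rel G z) = t z := by
  constructor
  · intro hD t
    obtain ⟨g, hg⟩ := hD (Finsupp.linearCombination R t)
    refine ⟨fun w => g (Finsupp.single w 1), fun z => ?_⟩
    have hy : Finsupp.linearCombination R (fun w => g (Finsupp.single w 1)) = g := by
      ext; simp
    rw [hy, ← presentation_single, ← LinearMap.comp_apply, hg, Finsupp.linearCombination_single,
      one_smul]
  · intro hsol f
    obtain ⟨y, hy⟩ := hsol fun z => f (Finsupp.single z 1)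
    refine ⟨Finsupp.linearCombination R y, ?_⟩
    ext z
    simp only [LinearMap.comp_apply, Finsupp.lsingle_apply, presentation_single, hy]

def solve (c : ∀ p : Family G, M → Fin p.n → M) (m : M) (t : Word G × Family G → M) :
    Word G → M
  | [] => m
  | ⟨p, i⟩ :: w => c p (solve c m t w - t (w, p)) i

lemma exists_solution (hM : MemDiv G M) (m : M) (t : Word G × Family G → M) :
    ∃ y : Word G → M, y [] = m ∧ ∀ z, Finsupp.linearCombination R y (rel G z) = t z := by
  choose c hc using fun p : Family G => exists_sum_smul_eq_of_span_smul_top (hM _ p.span_mem)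
  refine ⟨solve c m t, rfl, fun ⟨w, p⟩ => ?_⟩
  rw [linearCombination_rel]
  change _ - ∑ i, p.gen i • c p (solve c m t w - t (w, p)) i = _
  rw [hc, sub_sub_cancel]

lemma exists_family (hft : GabrielFiniteType G) {I : Ideal R} (hI : I ∈ G) (tag : Bool) :
    ∃ p : Family G, p.tag = tag ∧ Ideal.span (Set.range p.gen) ≤ I := by
  obtain ⟨J, hJG, hJI, hfg⟩ := hft I hI
  obtain ⟨n, a, ha⟩ := Submodule.fg_iff_exists_fin_generating_family.1 hfg
  rw [Ideal.submodule_span_eq] at ha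
  exact ⟨⟨n, a, ha ▸ hJG, tag⟩, rfl, ha ▸ hJI⟩

lemma memDiv_iff_forall_family (hft : GabrielFiniteType G) :
    MemDiv G M ↔ ∀ p : Family G, Ideal.span (Set.range p.gen) • (⊤ : Submodule R M) = ⊤ := by
  refine ⟨fun hM p => hM _ p.span_mem, fun hM I hI => ?_⟩
  obtain ⟨p, -, hp⟩ := exists_family hft hI true
  exact eq_top_iff.2 ((hM p).ge.trans (Submodule.smul_mono hp le_rfl))

lemma memD_presentation_of_memDiv (hM : MemDiv G M) : MemD (presentation G) M :=
  memD_presentation_iff.2 fun t =>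
    (exists_solution hM 0 t).imp fun _ => And.right

lemma memDiv_of_memD_presentation (hft : GabrielFiniteType G) (hD : MemD (presentation G) M) :
    MemDiv G M := by
  classical
  intro I hI
  obtain ⟨p, hp, hpI⟩ := exists_family hft hI true
  let q : Family G := { p with tag := false }
  refine eq_top_iff.2 fun m _ => Submodule.smul_mono hpI le_rfl ?_
  obtain ⟨y, hy⟩ := memD_presentation_iff.1 hD fun z => if z = ([], p) then m else 0
  have hp' := hy ([], p)
  have hq := hy ([], q)
  rw [if_pos rfl, linearCombination_rel] at hp'
  have hqp : ([], q) ≠ (([], p) : Word G × Family G) := fun h => by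
    simpa [q, hp] using congrArg (Family.tag ∘ Prod.snd) h
  rw [if_neg hqp, linearCombination_rel, sub_eq_zero] at hq
  have hm : m = ∑ i, p.gen i • (y (⟨q, i⟩ :: []) - y (⟨p, i⟩ :: [])) := by
    simp only [smul_sub, Finset.sum_sub_distrib]
    exact hp'.symm.trans (congrArg (· - _) hq)
  rw [hm]
  exact sum_smul_mem_span_smul_top _ _

lemma mkQ_single_eq_sum (p : Family G) (w : Word G) :
    (LinearMap.range (presentation G)).mkQ (Finsupp.single w 1) =
      ∑ i, p.gen i • (LinearMap.range (presentation G)).mkQ (Finsupp.single (⟨p, i⟩ :: w) 1) := by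
  have h : (LinearMap.range (presentation G)).mkQ (rel G (w, p)) = 0 :=
    (Submodule.Quotient.mk_eq_zero _).2 ⟨_, presentation_single (w, p)⟩
  simpa only [rel, map_sub, map_sum, map_smul, sub_eq_zero] using h

lemma memDiv_siltingModule (hft : GabrielFiniteType G) : MemDiv G (SiltingModule G) := by
  refine (memDiv_iff_forall_family hft).2 fun p => eq_top_iff.2 ?_
  rintro x -
  obtain ⟨f, rfl⟩ := Submodule.mkQ_surjective _ x
  induction f using Finsupp.induction_linear with
  | zero => simpa only [map_zero] using Submodule.zero_mem _
  | add f g hf hg => simpa only [map_add] using Submodule.add_mem _ hf hg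
  | single w r =>
    rw [← mul_one r, ← smul_eq_mul, ← Finsupp.smul_single, map_smul, mkQ_single_eq_sum p w]
    exact Submodule.smul_of_tower_mem _ r (sum_smul_mem_span_smul_top _ _)

lemma memGen_siltingModule_of_memDiv (hM : MemDiv G M) : MemGen R (SiltingModule G) M := by
  have hhit : ∀ m : M, ∃ h : SiltingModule G →ₗ[R] M,
      h ((LinearMap.range (presentation G)).mkQ (Finsupp.single [] 1)) = m := by
    intro m
    obtain ⟨y, hy₀, hy⟩ := exists_solution hM m 0
    have hker :
        LinearMap.range (presentation G) ≤ LinearMap.ker (Finsupp.linearCombination R y) := by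
      rw [LinearMap.range_le_ker_iff]
      ext z
      simp only [LinearMap.comp_apply, Finsupp.lsingle_apply, presentation_single, hy,
        Pi.zero_apply, LinearMap.zero_apply]
    refine ⟨Submodule.liftQ _ _ hker, ?_⟩
    rw [Submodule.mkQ_apply, Submodule.liftQ_apply, Finsupp.linearCombination_single, one_smul, hy₀]
  choose h hh using hhit
  exact ⟨M, Finsupp.lsum R h, fun m => ⟨Finsupp.single m _, by rw [Finsupp.lsum_single, hh]⟩⟩

lemma memGen_siltingModule_iff (hft : GabrielFiniteType G) :
    MemGen R (SiltingModule G) M ↔ MemDiv G M :=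
  ⟨fun ⟨_, _, hg⟩ => MemDiv.of_surjective (MemDiv.finsupp (memDiv_siltingModule hft)) hg,
    memGen_siltingModule_of_memDiv⟩

lemma memD_presentation_iff_memDiv (hft : GabrielFiniteType G) :
    MemD (presentation G) M ↔ MemDiv G M :=
  ⟨memDiv_of_memD_presentation hft, memD_presentation_of_memDiv⟩

lemma isSilting_siltingModule (hft : GabrielFiniteType G) : IsSilting R (SiltingModule G) :=
  ⟨_, _, _, _, _, _, inferInstance, inferInstance, presentation G, Submodule.mkQ _,
    Submodule.mkQ_surjective _, Submodule.ker_mkQ _, fun _ _ _ =>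
      (memGen_siltingModule_iff hft).trans (memD_presentation_iff_memDiv hft).symm⟩

end DivisibleSilting

open DivisibleSilting in
theorem stmt_15_general {R : Type u} [CommRing R]
    (G : Set (Ideal R)) (hft : GabrielFiniteType G) :
    ∃ (T : Type u) (_ : AddCommGroup T) (_ : Module R T),
      IsSilting R T ∧
      ∀ (M : Type u) [AddCommGroup M] [Module R M], MemGen R T M ↔ MemDiv G M :=
  ⟨SiltingModule G, inferInstance, inferInstance, isSilting_siltingModule hft,
    fun _ _ _ => memGen_siltingModule_iff hft⟩

/-- For every Gabriel filter of finite type `G` over a commutative ring there is a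
silting module `T` with `Gen T = Div G`. -/
theorem stmt_15 {R : Type u} [CommRing R]
    (G : Set (Ideal R)) (hG : IsGabrielFilter G) (hft : GabrielFiniteType G) :
    ∃ (T : Type u) (_ : AddCommGroup T) (_ : Module R T),
      IsSilting R T ∧
      ∀ (M : Type u) [AddCommGroup M] [Module R M], MemGen R T M ↔ MemDiv G M :=
  stmt_15_general G hft
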